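/- arXiv:math/9903092 — 2 statements merged into one kernel-verified Lean document; each statement's English description precedes it below -/
import Mathlib

section
/- Let F be a field of characteristic 2, let u ∈ F((x⁻¹)), and let Q, R, S, T ∈ F[x] satisfy S·u² + T ≠ 0 and u = (Q·u² + R)/(S·u² + T). Then for every c ∈ F(x) with S·c² + T ≠ 0, one has u − (Q·c² + R)/(S·c² + T) = (Q·T − R·S)·(u − c)² / ((S·u² + T)·(S·c² + T)). -/
open Polynomial
open scoped Classical

noncomputable section

namespace PaperCF

/-- The element `x` of `F((x⁻¹))`, realized as the Hahn series `T⁻¹` where `T` is the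
Hahn-series variable (so a series in `x⁻¹` has well-ordered support in `T`). -/
def xx (F : Type*) [Field F] : LaurentSeries F := HahnSeries.single (-1 : ℤ) 1

/-- Embedding of the polynomial ring `F[x]` into `F((x⁻¹))`, `x ↦ xx`. -/
def polyEmb (F : Type*) [Field F] : Polynomial F →+* LaurentSeries F :=
  (Polynomial.aeval (xx F)).toRingHom

/-- The degree of a Laurent series in `x⁻¹` (largest exponent of `x` with nonzero
coefficient), with `deg 0 = ⊥`. -/
def degB (F : Type*) [Field F] (u : LaurentSeries F) : WithBot ℤ :=
  if u = 0 then ⊥ else (-u.order : ℤ)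

/-- The non-archimedean absolute value `|u| = q ^ deg u` (and `|0| = 0`). -/
def absVal (F : Type*) [Field F] (q : ℝ) (u : LaurentSeries F) : ℝ :=
  if u = 0 then 0 else q ^ (-u.order)

/-- `u` is irrational: it is not a ratio of two polynomials in `x`. -/
def IsIrrational (F : Type*) [Field F] (u : LaurentSeries F) : Prop :=
  ∀ a b : Polynomial F, b ≠ 0 → u * polyEmb F b ≠ polyEmb F a

/-- The (necessarily unique, non-terminating) continued fraction expansion of `u`:
`p i` are the partial quotients, `U i` the complete quotients.  The condition
`0 < (U i - p i).order` says exactly that `p i` is the integral part of `U i`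
(the difference has only negative powers of `x`). -/
structure CFExpansion (F : Type*) [Field F] (u : LaurentSeries F) where
  p : ℕ → Polynomial F
  U : ℕ → LaurentSeries F
  U_zero : U 0 = u
  ne : ∀ i, U i ≠ polyEmb F (p i)
  intPart : ∀ i, 0 < (U i - polyEmb F (p i)).order
  step : ∀ i, U (i + 1) = (U i - polyEmb F (p i))⁻¹

/-- Numerators `aₙ` of the convergents: `aₙ = pₙ aₙ₋₁ + aₙ₋₂`. -/
def convNum {F : Type*} [Field F] (p : ℕ → Polynomial F) : ℕ → Polynomial F
  | 0 => p 0
  | 1 => p 1 * p 0 + 1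
  | (n + 2) => p (n + 2) * convNum p (n + 1) + convNum p n

/-- Denominators `bₙ` of the convergents: `bₙ = pₙ bₙ₋₁ + bₙ₋₂`. -/
def convDen {F : Type*} [Field F] (p : ℕ → Polynomial F) : ℕ → Polynomial F
  | 0 => 1
  | 1 => p 1
  | (n + 2) => p (n + 2) * convDen p (n + 1) + convDen p n

/-- The `n`-th convergent `cₙ = aₙ/bₙ = [p₀; p₁, …, pₙ]`. -/
def conv (F : Type*) [Field F] (p : ℕ → Polynomial F) (n : ℕ) : LaurentSeries F :=
  polyEmb F (convNum p n) / polyEmb F (convDen p n)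

/-- `u` has bounded partial quotients. -/
def HasBoundedPQ (F : Type*) [Field F] (u : LaurentSeries F) : Prop :=
  ∃ cf : CFExpansion F u, ∃ N : ℕ, ∀ i, (cf.p i).natDegree ≤ N

/-- The integral part `⌊u⌋ ∈ F[x]`: the sum of the terms of `u` of nonnegative degree. -/
def intPart (F : Type*) [Field F] (u : LaurentSeries F) : Polynomial F :=
  ∑ n ∈ Finset.Icc (0 : ℤ) (-u.order), Polynomial.monomial n.toNat (u.coeff (-n))

/-- The sequence of complete quotients produced by the continued fraction algorithm
(with junk value `0⁻¹ = 0` after termination). -/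
def cqSeq (F : Type*) [Field F] (u : LaurentSeries F) : ℕ → LaurentSeries F
  | 0 => u
  | n + 1 => (cqSeq F u n - polyEmb F (intPart F (cqSeq F u n)))⁻¹

instance charP_laurentSeries (F : Type*) [Field F] (p : ℕ) [CharP F p] :
    CharP (LaurentSeries F) p :=
  charP_of_injective_algebraMap (algebraMap F (LaurentSeries F)).injective p

theorem sub_moebius_sq_eq_of_fixed {K : Type*} [Field K] [CharP K 2] {q r s t u c : K}
    (hu : s * u ^ 2 + t ≠ 0) (hc : s * c ^ 2 + t ≠ 0)
    (hfix : u = (q * u ^ 2 + r) / (s * u ^ 2 + t)) :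
    u - (q * c ^ 2 + r) / (s * c ^ 2 + t) =
      (q * t - r * s) * (u - c) ^ 2 / ((s * u ^ 2 + t) * (s * c ^ 2 + t)) := by
  have hfix' : u * (s * u ^ 2 + t) = q * u ^ 2 + r := (eq_div_iff hu).mp hfix
  have hnum : u * (s * c ^ 2 + t) - (q * c ^ 2 + r) = (q - u * s) * (u ^ 2 - c ^ 2) := by
    linear_combination hfix'
  have hsq : u ^ 2 - c ^ 2 = (u - c) ^ 2 := by
    rw [CharTwo.sub_eq_add, CharTwo.sub_eq_add, CharTwo.add_sq]
  have hcoef : (q - u * s) * (s * u ^ 2 + t) = q * t - r * s := by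
    linear_combination (-s) * hfix'
  calc u - (q * c ^ 2 + r) / (s * c ^ 2 + t)
      = (q - u * s) * (u - c) ^ 2 / (s * c ^ 2 + t) := by rw [sub_div' hc, hnum, hsq]
    _ = (q * t - r * s) * (u - c) ^ 2 / ((s * u ^ 2 + t) * (s * c ^ 2 + t)) := by
      rw [← hcoef, mul_right_comm, mul_comm (s * u ^ 2 + t), mul_div_mul_right _ _ hu]

/-- the algebraic identity
`u - (Qc²+R)/(Sc²+T) = (QT-RS)(u-c)²/((Su²+T)(Sc²+T))` for rational `c`, in
characteristic 2. -/
theorem statement2 (F : Type*) [Field F] [CharP F 2] (u : LaurentSeries F)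
    (Q R S T : Polynomial F)
    (hden : polyEmb F S * u ^ 2 + polyEmb F T ≠ 0)
    (heq : u = (polyEmb F Q * u ^ 2 + polyEmb F R) / (polyEmb F S * u ^ 2 + polyEmb F T)) :
    ∀ a b : Polynomial F, b ≠ 0 →
      ∀ c : LaurentSeries F, c = polyEmb F a / polyEmb F b →
        polyEmb F S * c ^ 2 + polyEmb F T ≠ 0 →
        u - (polyEmb F Q * c ^ 2 + polyEmb F R) / (polyEmb F S * c ^ 2 + polyEmb F T)
          = polyEmb F (Q * T - R * S) * (u - c) ^ 2 /
            ((polyEmb F S * u ^ 2 + polyEmb F T) * (polyEmb F S * c ^ 2 + polyEmb F T)) := by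
  intro _ _ _ c _ hcden
  rw [map_sub, map_mul, map_mul]
  exact sub_moebius_sq_eq_of_fixed hden hcden heq

end PaperCF
end
end

section
/- Let F be a field, let u ∈ F((x⁻¹)) be irrational, and let a, b ∈ F[x] be coprime with b ≠ 0. If |u − a/b| = |x|^(−k)·|b|^(−2) for some positive integer k, then there is an index n ≥ 0 such that a/b equals the n-th convergent cₙ of u and k = deg pₙ₊₁. -/
/-!
Write `Aₙ / Bₙ` for the convergents of `u`. The continued fraction identities give
`|u Bₙ - Aₙ| = |Bₙ₊₁|⁻¹ = |x| ^ (-deg pₙ₊₁) |Bₙ|⁻¹`, and `deg Bₙ` increases strictly from `0`,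
so some `n` has `deg Bₙ ≤ deg b < deg Bₙ₊₁`. For this `n` the polynomial
`a Bₙ - b Aₙ = b (u Bₙ - Aₙ) - Bₙ (u b - a)` has absolute value `< 1`, hence vanishes. Coprimality
of `a` and `b` then forces `b ∣ Bₙ`, so `deg Bₙ = deg b` and `a / b = Aₙ / Bₙ`; comparing
`|u Bₙ - Aₙ|` with `|u b - a| = |x| ^ (-k) |b|⁻¹` gives `k = deg pₙ₊₁`.
-/

open Polynomial
open scoped Classical

noncomputable section

namespace HahnSeries

theorem add_ne_zero_and_order_add_eq_left {Γ R : Type*} [Zero Γ] [LinearOrder Γ] [AddMonoid R]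
    {x y : HahnSeries Γ R} (hx : x ≠ 0) (hxy : y ≠ 0 → x.order < y.order) :
    x + y ≠ 0 ∧ (x + y).order = x.order := by
  have hlt : x.orderTop < y.orderTop := by
    rcases eq_or_ne y 0 with rfl | hy
    · simpa using hx
    · rw [← order_eq_orderTop_of_ne_zero hx, ← order_eq_orderTop_of_ne_zero hy]
      exact WithTop.coe_lt_coe.mpr (hxy hy)
  have htop := orderTop_add_eq_left hlt
  have hne : x + y ≠ 0 := orderTop_ne_top.mp (htop ▸ orderTop_ne_top.mpr hx)
  refine ⟨hne, WithTop.coe_injective ?_⟩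
  rw [order_eq_orderTop_of_ne_zero hne, order_eq_orderTop_of_ne_zero hx, htop]

theorem order_inv {Γ R : Type*} [AddCommGroup Γ] [LinearOrder Γ] [IsOrderedAddMonoid Γ] [Field R]
    {x : HahnSeries Γ R} (hx : x ≠ 0) : x⁻¹.order = -x.order := by
  have h := order_mul hx (inv_ne_zero hx)
  rw [mul_inv_cancel₀ hx, order_one] at h
  exact (neg_eq_of_add_eq_zero_right h.symm).symm

end HahnSeries

namespace Polynomial

variable {R : Type*} [CommSemiring R] [NoZeroDivisors R]

theorem natDegree_mul_add_of_degree_lt {p b c : R[X]} (hp : p ≠ 0) (hc : c.degree < b.degree) :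
    (p * b + c).natDegree = p.natDegree + b.natDegree := by
  have hlt : c.degree < (p * b).degree := hc.trans_le (mul_comm b p ▸ degree_le_mul_left b hp)
  rw [natDegree_add_eq_left_of_degree_lt hlt, natDegree_mul hp (ne_zero_of_degree_gt hc)]

theorem degree_lt_degree_mul_add {p b c : R[X]} (hp : 0 < p.degree) (hc : c.degree < b.degree) :
    b.degree < (p * b + c).degree := by
  refine degree_lt_degree ?_
  rw [natDegree_mul_add_of_degree_lt (ne_zero_of_degree_gt hp) hc]
  have := natDegree_pos_iff_degree_pos.mpr hp
  omega

end Polynomial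

theorem Nat.exists_le_lt_succ_of_strictMono {f : ℕ → ℕ} (hf : StrictMono f) {m : ℕ}
    (h0 : f 0 ≤ m) : ∃ n, f n ≤ m ∧ m < f (n + 1) := by
  have hex : ∃ n, m < f (n + 1) := ⟨m, Nat.lt_succ_self m |>.trans_le (hf.id_le _)⟩
  refine ⟨Nat.find hex, ?_, Nat.find_spec hex⟩
  rcases h : Nat.find hex with _ | n
  · exact h0
  · exact not_lt.mp (Nat.find_min hex (h ▸ Nat.lt_succ_self n))

namespace PaperCF

section Embedding

variable {F : Type*} [Field F]

theorem polyEmb_monomial (n : ℕ) (c : F) :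
    polyEmb F (monomial n c) = HahnSeries.single (-(n : ℤ)) c := by
  simp [polyEmb, xx, HahnSeries.single_pow, HahnSeries.algebraMap_apply']

theorem coeff_polyEmb (b : F[X]) (g : ℤ) :
    (polyEmb F b).coeff g = if g ≤ 0 then b.coeff (-g).toNat else 0 := by
  induction b using Polynomial.induction_on' with
  | add b c hb hc => split_ifs at hb hc ⊢ <;> simp_all
  | monomial n c =>
    rw [polyEmb_monomial, HahnSeries.coeff_single, coeff_monomial]
    split_ifs <;> first | rfl | omega

theorem coeff_polyEmb_neg (b : F[X]) (n : ℕ) : (polyEmb F b).coeff (-(n : ℤ)) = b.coeff n := by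
  simp [coeff_polyEmb]

theorem polyEmb_injective : Function.Injective (polyEmb F) := by
  refine (injective_iff_map_eq_zero _).mpr fun b hb => Polynomial.ext fun n => ?_
  rw [← coeff_polyEmb_neg, hb, HahnSeries.coeff_zero, coeff_zero]

theorem polyEmb_ne_zero {b : F[X]} (hb : b ≠ 0) : polyEmb F b ≠ 0 :=
  (map_ne_zero_iff _ polyEmb_injective).mpr hb

theorem order_polyEmb {b : F[X]} (hb : b ≠ 0) : (polyEmb F b).order = -(b.natDegree : ℤ) := by
  have hlead : (polyEmb F b).coeff (-(b.natDegree : ℤ)) ≠ 0 := by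
    rw [coeff_polyEmb_neg]; exact leadingCoeff_ne_zero.mpr hb
  refine le_antisymm (HahnSeries.order_le_of_coeff_ne_zero hlead) ?_
  refine (HahnSeries.le_order_iff_forall (polyEmb_ne_zero hb)).mpr fun g hg => ?_
  rw [coeff_polyEmb, if_pos (by omega)]
  exact coeff_eq_zero_of_natDegree_lt (by omega)

theorem zero_lt_orderTop_polyEmb_mul {b : F[X]} {w : LaurentSeries F} (hb : b ≠ 0)
    (h : (b.natDegree : ℤ) < w.order) : 0 < (polyEmb F b * w).orderTop := by
  have hw : w ≠ 0 := by rintro rfl; simp at h; omega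
  refine HahnSeries.zero_lt_orderTop_of_order ?_
  rw [HahnSeries.order_mul (polyEmb_ne_zero hb) hw, order_polyEmb hb]
  omega

theorem eq_zero_of_zero_lt_orderTop_polyEmb {b : F[X]} (h : 0 < (polyEmb F b).orderTop) :
    b = 0 := by
  by_contra hb
  rw [← HahnSeries.order_eq_orderTop_of_ne_zero (polyEmb_ne_zero hb), order_polyEmb hb] at h
  norm_cast at h
  omega

theorem mul_eq_mul_of_natDegree_lt_order {u : LaurentSeries F} {a b c d : F[X]}
    (hb : b ≠ 0) (hd : d ≠ 0)
    (hbd : (b.natDegree : ℤ) < (u * polyEmb F d - polyEmb F c).order)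
    (hdb : (d.natDegree : ℤ) < (u * polyEmb F b - polyEmb F a).order) :
    a * d = b * c := by
  have hsplit : polyEmb F (a * d - b * c)
      = polyEmb F b * (u * polyEmb F d - polyEmb F c)
        - polyEmb F d * (u * polyEmb F b - polyEmb F a) := by
    simp only [map_sub, map_mul]; ring
  have hpos : 0 < (polyEmb F (a * d - b * c)).orderTop := by
    rw [hsplit]
    exact lt_min (zero_lt_orderTop_polyEmb_mul hb hbd) (zero_lt_orderTop_polyEmb_mul hd hdb)
      |>.trans_le HahnSeries.min_orderTop_le_orderTop_sub
  exact sub_eq_zero.mp (eq_zero_of_zero_lt_orderTop_polyEmb hpos)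

theorem order_mul_sub_eq_of_mul_eq_mul {u : LaurentSeries F} {a b c d : F[X]}
    (hb : b ≠ 0) (hd : d ≠ 0) (h : a * d = b * c) (hdeg : b.natDegree = d.natDegree) :
    (u * polyEmb F d - polyEmb F c).order = (u * polyEmb F b - polyEmb F a).order := by
  have hscale : (u * polyEmb F d - polyEmb F c) * polyEmb F b
      = (u * polyEmb F b - polyEmb F a) * polyEmb F d := by
    have hE := congrArg (polyEmb F) h
    rw [map_mul, map_mul] at hE
    linear_combination hE
  rcases eq_or_ne (u * polyEmb F b - polyEmb F a) 0 with h0 | h0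
  · rw [h0, zero_mul, mul_eq_zero_iff_right (polyEmb_ne_zero hb)] at hscale
    rw [h0, hscale]
  have h0' : u * polyEmb F d - polyEmb F c ≠ 0 := by
    rintro h'
    rw [h', zero_mul, eq_comm, mul_eq_zero_iff_right (polyEmb_ne_zero hd)] at hscale
    exact h0 hscale
  have := congrArg HahnSeries.order hscale
  rwa [HahnSeries.order_mul h0' (polyEmb_ne_zero hb), HahnSeries.order_mul h0 (polyEmb_ne_zero hd),
    order_polyEmb hb, order_polyEmb hd, hdeg, add_left_inj] at this

theorem ne_zero_and_order_eq_of_absVal_eq_zpow {q : ℝ} (hq : 1 < q)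
    {v : LaurentSeries F} {e : ℤ} (h : absVal F q v = q ^ e) : v ≠ 0 ∧ v.order = -e := by
  have hv : v ≠ 0 := by
    rintro rfl
    rw [absVal, if_pos rfl] at h
    exact (zpow_pos (by linarith) e).ne h
  rw [absVal, if_neg hv] at h
  exact ⟨hv, by rw [← zpow_right_injective₀ (by linarith) hq.ne' h, neg_neg]⟩

theorem absVal_polyEmb (q : ℝ) {b : F[X]} (hb : b ≠ 0) :
    absVal F q (polyEmb F b) = q ^ (b.natDegree : ℤ) := by
  rw [absVal, if_neg (polyEmb_ne_zero hb), order_polyEmb hb, neg_neg]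

theorem order_mul_sub_of_absVal_eq {q : ℝ} (hq : 1 < q)
    {u : LaurentSeries F} {a b : F[X]} (hb : b ≠ 0) {e : ℤ}
    (h : absVal F q (u - polyEmb F a / polyEmb F b)
      = q ^ (-e) * (absVal F q (polyEmb F b)) ^ (-2 : ℤ)) :
    (u * polyEmb F b - polyEmb F a).order = e + b.natDegree := by
  have hbE := polyEmb_ne_zero hb
  rw [absVal_polyEmb q hb, ← zpow_mul, ← zpow_add₀ (by positivity)] at h
  obtain ⟨hdiff, hdiff_order⟩ := ne_zero_and_order_eq_of_absVal_eq_zpow hq h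
  have hfactor : u * polyEmb F b - polyEmb F a = (u - polyEmb F a / polyEmb F b) * polyEmb F b := by
    rw [sub_mul, div_mul_cancel₀ _ hbE]
  rw [hfactor, HahnSeries.order_mul hdiff hbE, hdiff_order, order_polyEmb hb]
  ring

end Embedding

section Convergents

variable {F : Type*} [Field F]

/-- `shiftedNum p (n + 1) = convNum p n`, preceded by the customary `A₋₁ = 1`, so that the
three-term recurrence holds from the start; likewise `shiftedDen` with `B₋₁ = 0`. -/
def shiftedNum (p : ℕ → F[X]) : ℕ → F[X]
  | 0 => 1
  | n + 1 => convNum p n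

def shiftedDen (p : ℕ → F[X]) : ℕ → F[X]
  | 0 => 0
  | n + 1 => convDen p n

theorem shiftedNum_add_two (p : ℕ → F[X]) (n : ℕ) :
    shiftedNum p (n + 2) = p (n + 1) * shiftedNum p (n + 1) + shiftedNum p n := by
  cases n <;> simp [shiftedNum, convNum]

theorem shiftedDen_add_two (p : ℕ → F[X]) (n : ℕ) :
    shiftedDen p (n + 2) = p (n + 1) * shiftedDen p (n + 1) + shiftedDen p n := by
  cases n <;> simp [shiftedDen, convDen]

theorem shiftedNum_mul_shiftedDen_sub (p : ℕ → F[X]) (n : ℕ) :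
    shiftedNum p (n + 1) * shiftedDen p n - shiftedNum p n * shiftedDen p (n + 1)
      = (-1) ^ (n + 1) := by
  induction n with
  | zero => simp [shiftedNum, shiftedDen, convNum, convDen]
  | succ n ih =>
    rw [shiftedNum_add_two, shiftedDen_add_two, pow_succ]
    linear_combination -ih

variable {p : ℕ → F[X]} (hp : ∀ i, 0 < (p (i + 1)).degree)
include hp

theorem degree_shiftedDen_lt_succ (n : ℕ) :
    (shiftedDen p n).degree < (shiftedDen p (n + 1)).degree := by
  induction n with
  | zero => simp [shiftedDen, convDen]
  | succ n ih =>
    rw [shiftedDen_add_two]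
    exact degree_lt_degree_mul_add (hp n) ih

theorem shiftedDen_succ_ne_zero (n : ℕ) : shiftedDen p (n + 1) ≠ 0 :=
  ne_zero_of_degree_gt (degree_shiftedDen_lt_succ hp n)

theorem natDegree_shiftedDen_add_two (n : ℕ) :
    (shiftedDen p (n + 2)).natDegree
      = (p (n + 1)).natDegree + (shiftedDen p (n + 1)).natDegree := by
  rw [shiftedDen_add_two]
  exact natDegree_mul_add_of_degree_lt (ne_zero_of_degree_gt (hp n))
    (degree_shiftedDen_lt_succ hp n)

theorem strictMono_natDegree_shiftedDen_succ :
    StrictMono fun n => (shiftedDen p (n + 1)).natDegree := by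
  refine strictMono_nat_of_lt_succ fun n => ?_
  have := natDegree_pos_iff_degree_pos.mpr (hp n)
  simp only [natDegree_shiftedDen_add_two hp n]
  omega

end Convergents

namespace CFExpansion

variable {F : Type*} [Field F] {u : LaurentSeries F} (cf : CFExpansion F u)

theorem U_sub_p_ne_zero (i : ℕ) : cf.U i - polyEmb F (cf.p i) ≠ 0 := sub_ne_zero.mpr (cf.ne i)

theorem U_succ_ne_zero (i : ℕ) : cf.U (i + 1) ≠ 0 := by
  rw [cf.step i]
  exact inv_ne_zero (cf.U_sub_p_ne_zero i)

theorem order_U_succ_neg (i : ℕ) : (cf.U (i + 1)).order < 0 := by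
  rw [cf.step i, HahnSeries.order_inv (cf.U_sub_p_ne_zero i), neg_neg_iff_pos]
  exact cf.intPart i

theorem natDegree_p_succ (i : ℕ) : ((cf.p (i + 1)).natDegree : ℤ) = -(cf.U (i + 1)).order := by
  have hsplit : polyEmb F (cf.p (i + 1))
      = cf.U (i + 1) + -(cf.U (i + 1) - polyEmb F (cf.p (i + 1))) := by ring
  obtain ⟨hne, hord⟩ :=
      HahnSeries.add_ne_zero_and_order_add_eq_left (cf.U_succ_ne_zero i) fun _ => by
    rw [HahnSeries.order_neg]
    exact (cf.order_U_succ_neg i).trans (cf.intPart (i + 1))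
  rw [← hsplit] at hne hord
  have hp : cf.p (i + 1) ≠ 0 := by rintro h; exact hne (by rw [h, map_zero])
  rw [← hord, order_polyEmb hp, neg_neg]

theorem degree_p_succ_pos (i : ℕ) : 0 < (cf.p (i + 1)).degree := by
  refine natDegree_pos_iff_degree_pos.mp ?_
  have := cf.natDegree_p_succ i
  have := cf.order_U_succ_neg i
  omega

/-- `u = [p₀; p₁, …, pₙ, Uₙ₊₁]`, cleared of denominators. -/
theorem u_mul_den_eq (n : ℕ) :
    u * (polyEmb F (shiftedDen cf.p (n + 1)) * cf.U (n + 1) + polyEmb F (shiftedDen cf.p n))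
      = polyEmb F (shiftedNum cf.p (n + 1)) * cf.U (n + 1) + polyEmb F (shiftedNum cf.p n) := by
  induction n with
  | zero =>
    have h := mul_inv_cancel₀ (cf.U_sub_p_ne_zero 0)
    rw [← cf.step, cf.U_zero] at h
    simp only [shiftedNum, shiftedDen, convNum, convDen, map_zero, map_one, add_zero, one_mul]
    linear_combination h
  | succ n ih =>
    have hU : cf.U (n + 1) = polyEmb F (cf.p (n + 1)) + (cf.U (n + 2))⁻¹ := by
      rw [cf.step (n + 1), inv_inv]
      ring
    rw [hU] at ih
    rw [shiftedNum_add_two, shiftedDen_add_two, map_add, map_add, map_mul, map_mul]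
    linear_combination ih * cf.U (n + 2)
      - (u * polyEmb F (shiftedDen cf.p (n + 1)) - polyEmb F (shiftedNum cf.p (n + 1)))
        * mul_inv_cancel₀ (cf.U_succ_ne_zero (n + 1))

theorem order_u_mul_shiftedDen_sub (n : ℕ) :
    (u * polyEmb F (shiftedDen cf.p (n + 1)) - polyEmb F (shiftedNum cf.p (n + 1))).order
      = (shiftedDen cf.p (n + 1)).natDegree + (cf.p (n + 1)).natDegree := by
  set B₁ := shiftedDen cf.p (n + 1)
  set W := polyEmb F B₁ * cf.U (n + 1) + polyEmb F (shiftedDen cf.p n)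
  have hB₁ : B₁ ≠ 0 := shiftedDen_succ_ne_zero cf.degree_p_succ_pos n
  have hlead : polyEmb F B₁ * cf.U (n + 1) ≠ 0 :=
    mul_ne_zero (polyEmb_ne_zero hB₁) (cf.U_succ_ne_zero n)
  have hlead_order : (polyEmb F B₁ * cf.U (n + 1)).order
      = -(B₁.natDegree + (cf.p (n + 1)).natDegree : ℤ) := by
    rw [HahnSeries.order_mul (polyEmb_ne_zero hB₁) (cf.U_succ_ne_zero n), order_polyEmb hB₁,
      cf.natDegree_p_succ n]
    ring
  obtain ⟨hW, hW_order⟩ := HahnSeries.add_ne_zero_and_order_add_eq_left hlead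
      (y := polyEmb F (shiftedDen cf.p n)) fun hB₀ => by
    have hB₀' : shiftedDen cf.p n ≠ 0 := fun h => hB₀ (by rw [h, map_zero])
    have : (shiftedDen cf.p n).natDegree ≤ B₁.natDegree :=
      natDegree_le_natDegree (degree_shiftedDen_lt_succ cf.degree_p_succ_pos n).le
    have := natDegree_pos_iff_degree_pos.mpr (cf.degree_p_succ_pos n)
    rw [hlead_order, order_polyEmb hB₀']
    omega
  have hprod : (u * polyEmb F B₁ - polyEmb F (shiftedNum cf.p (n + 1))) * W = (-1) ^ n := by
    have hdet := congrArg (polyEmb F) (shiftedNum_mul_shiftedDen_sub cf.p n)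
    simp only [map_sub, map_mul, map_pow, map_neg, map_one] at hdet
    linear_combination polyEmb F B₁ * cf.u_mul_den_eq n - hdet
  have hsign : ((-1 : LaurentSeries F) ^ n).order = 0 := by
    rcases neg_one_pow_eq_or (LaurentSeries F) n with h | h <;>
      simp [h, HahnSeries.order_neg, HahnSeries.order_one]
  have hne : u * polyEmb F B₁ - polyEmb F (shiftedNum cf.p (n + 1)) ≠ 0 :=
    left_ne_zero_of_mul (hprod ▸ pow_ne_zero n (neg_ne_zero.mpr one_ne_zero))
  have := HahnSeries.order_mul hne hW
  rw [hprod, hsign, hW_order, hlead_order] at this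
  omega

end CFExpansion

theorem statement4_general (F : Type*) [Field F] (q : ℝ) (hq : 1 < q)
    (u : LaurentSeries F) (cf : CFExpansion F u)
    (a b : Polynomial F) (hab : IsCoprime a b) (hb : b ≠ 0)
    (k : ℕ) (hk : 0 < k)
    (hacc : absVal F q (u - polyEmb F a / polyEmb F b)
      = q ^ (-(k : ℤ)) * (absVal F q (polyEmb F b)) ^ (-2 : ℤ)) :
    ∃ n : ℕ, polyEmb F a / polyEmb F b = conv F cf.p n ∧ k = (cf.p (n + 1)).natDegree := by
  have hab_order := order_mul_sub_of_absVal_eq hq hb hacc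
  have hpos := cf.degree_p_succ_pos
  obtain ⟨n, hn_le, hn_lt⟩ := Nat.exists_le_lt_succ_of_strictMono
    (strictMono_natDegree_shiftedDen_succ hpos) (m := b.natDegree) (by simp [shiftedDen, convDen])
  rw [natDegree_shiftedDen_add_two hpos] at hn_lt
  have hB := shiftedDen_succ_ne_zero hpos n
  have hAB_order := cf.order_u_mul_shiftedDen_sub n
  set A := shiftedNum cf.p (n + 1)
  set B := shiftedDen cf.p (n + 1)
  have heq : a * B = b * A := mul_eq_mul_of_natDegree_lt_order hb hB
    (by rw [hAB_order]; omega) (by rw [hab_order]; omega)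
  have hBb : B.natDegree = b.natDegree :=
    hn_le.antisymm (natDegree_le_of_dvd (hab.symm.dvd_of_dvd_mul_left ⟨A, heq⟩) hB)
  refine ⟨n, ?_, ?_⟩
  · show polyEmb F a / polyEmb F b = polyEmb F A / polyEmb F B
    rw [div_eq_div_iff (polyEmb_ne_zero hb) (polyEmb_ne_zero hB), ← map_mul, ← map_mul, heq,
      mul_comm]
  · have := order_mul_sub_eq_of_mul_eq_mul (u := u) hb hB heq hBb.symm
    rw [hAB_order, hab_order, hBb] at this
    omega

/-- if coprime `a, b` satisfy `|u - a/b| = |x|^(-k)·|b|^(-2)` with `k` a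
positive integer, then `a/b` is the `n`-th convergent of `u` for some `n`, and
`k = deg pₙ₊₁`. -/
theorem statement4 (F : Type*) [Field F] (q : ℝ) (hq : 1 < q)
    (u : LaurentSeries F) (hu : IsIrrational F u) (cf : CFExpansion F u)
    (a b : Polynomial F) (hab : IsCoprime a b) (hb : b ≠ 0)
    (k : ℕ) (hk : 0 < k)
    (hacc : absVal F q (u - polyEmb F a / polyEmb F b)
      = q ^ (-(k : ℤ)) * (absVal F q (polyEmb F b)) ^ (-2 : ℤ)) :
    ∃ n : ℕ, polyEmb F a / polyEmb F b = conv F cf.p n ∧ k = (cf.p (n + 1)).natDegree :=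
  statement4_general F q hq u cf a b hab hb k hk hacc

end PaperCF
end
end
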